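/- Let T : C(X,E) → C(Y,F) be a surjective linear map that preserves common zeros. Then the set Z := ⋃_{x∈X} Z_x (where Z_x := ⋂_{f ∈ C(X,E), f(x)=0} cl_{βY}(ι_Y(Z(Tf)))) is contained in the Hewitt realcompactification υY ⊆ βY. -/

import Mathlib

open Set Filter Topology

/-- A map `T` between `C(X,E)` and `C(Y,F)` preserves common zeros if for every `k ∈ ℕ` and
every finite family `f₁, …, f_k` in `C(X,E)`, the zero sets of the `fᵢ` have a common point
iff the zero sets of the `T fᵢ` do. -/
def PreservesCommonZerosC {X Y E F : Type*} [TopologicalSpace X] [TopologicalSpace Y]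
    [TopologicalSpace E] [Zero E] [TopologicalSpace F] [Zero F]
    (T : C(X, E) → C(Y, F)) : Prop :=
  ∀ (k : ℕ) (f : Fin (k + 1) → C(X, E)),
    (⋂ i, {x | f i x = 0}).Nonempty ↔ (⋂ i, {y | T (f i) y = 0}).Nonempty

/-- The unique continuous extension `ψ* : βY → ℝ ∪ {∞}` of `ψ ∈ C(Y)` with values in the
one-point compactification of `ℝ`. -/
noncomputable def onePointExt {Y : Type*} [TopologicalSpace Y] (ψ : C(Y, ℝ)) :
    StoneCech Y → OnePoint ℝ :=
  stoneCechExtend (OnePoint.continuous_coe.comp ψ.continuous)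

/-- The Hewitt realcompactification `υY ⊆ βY`: the set of points of `βY` at which the
extension of every real-valued continuous function on `Y` takes a finite value. -/
def hewittRealcompactification (Y : Type*) [TopologicalSpace Y] : Set (StoneCech Y) :=
  {p | ∀ ψ : C(Y, ℝ), onePointExt ψ p ≠ OnePoint.infty}

/-- A completely regular Hausdorff space is realcompact if the image of the canonical map
`ι_X : X → βX` is exactly the Hewitt realcompactification `υX`. -/
def Realcompact (X : Type*) [TopologicalSpace X] : Prop :=
  Set.range (stoneCechUnit : X → StoneCech X) = hewittRealcompactification X

/-- The set `Z_x ⊆ βY` for `T : C(X,E) → C(Y,F)`. -/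
def ZxC {X Y E F : Type*} [TopologicalSpace X] [TopologicalSpace Y]
    [TopologicalSpace E] [Zero E] [TopologicalSpace F] [Zero F]
    (T : C(X, E) → C(Y, F)) (x : X) : Set (StoneCech Y) :=
  ⋂ (f : C(X, E)) (_ : f x = 0), closure (stoneCechUnit '' {y | T f y = 0})

/-!
Fix `x ∈ X`, `p ∈ Z_x` and `ψ ∈ C(Y)`; we must show `ψ*(p) ≠ ∞`. Pick `e₀ ≠ 0` in `E` and, by
surjectivity, `f` with `T f = ψ • T(e₀)`; put `e₁ := f x` and `f₀ := f - e₁`, so `f₀ x = 0` and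
`p ∈ cl(ι(Z(T f₀)))`. At a zero `y` of `T f₀`, linearity gives `T(ψ(y) e₀ - e₁)(y) = 0`, and a
constant whose image under `T` has a zero must itself be zero, so `ψ(y) e₀ = e₁`. Hence `ψ` is
constant on `Z(T f₀)`, so `ψ*` is finite on the closure of `ι(Z(T f₀))` in `βY`.
-/

theorem PreservesCommonZerosC.eq_zero_of_map_const_apply_eq_zero {X Y E F : Type*}
    [TopologicalSpace X] [TopologicalSpace Y] [TopologicalSpace E] [Zero E]
    [TopologicalSpace F] [Zero F] {T : C(X, E) → C(Y, F)} (hT : PreservesCommonZerosC T)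
    {e : E} {y : Y} (hy : T (ContinuousMap.const X e) y = 0) : e = 0 := by
  obtain ⟨x, hx⟩ := (hT 0 fun _ => ContinuousMap.const X e).2 ⟨y, mem_iInter.2 fun _ => hy⟩
  exact mem_iInter.1 hx 0

section LinearMap

variable {X Y E F : Type*} [TopologicalSpace X] [TopologicalSpace Y]
    [AddCommGroup E] [Module ℝ E] [TopologicalSpace E] [IsTopologicalAddGroup E]
    [ContinuousConstSMul ℝ E]
    [AddCommGroup F] [Module ℝ F] [TopologicalSpace F] [IsTopologicalAddGroup F]
    [ContinuousSMul ℝ F]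
    {T : C(X, E) →ₗ[ℝ] C(Y, F)}

theorem PreservesCommonZerosC.smul_eq_of_smul_map_const_apply_eq
    (hT : PreservesCommonZerosC (T : C(X, E) → C(Y, F))) {a : ℝ} {e₀ e₁ : E} {y : Y}
    (hy : a • T (ContinuousMap.const X e₀) y = T (ContinuousMap.const X e₁) y) :
    a • e₀ = e₁ := by
  have hconst : ContinuousMap.const X (a • e₀ - e₁)
      = a • ContinuousMap.const X e₀ - ContinuousMap.const X e₁ := rfl
  refine sub_eq_zero.1 (hT.eq_zero_of_map_const_apply_eq_zero (y := y) ?_)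
  rw [hconst, map_sub, map_smul, ContinuousMap.sub_apply, ContinuousMap.smul_apply, hy]
  exact sub_self _

theorem PreservesCommonZerosC.exists_apply_eq_zero_and_subsingleton_image [Nontrivial E]
    (hTsurj : Function.Surjective T) (hT : PreservesCommonZerosC (T : C(X, E) → C(Y, F)))
    (x : X) (ψ : C(Y, ℝ)) :
    ∃ f₀ : C(X, E), f₀ x = 0 ∧ (ψ '' {y | T f₀ y = 0}).Subsingleton := by
  obtain ⟨e₀, he₀⟩ := exists_ne (0 : E)
  obtain ⟨f, hf⟩ := hTsurj (ψ • T (ContinuousMap.const X e₀))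
  refine ⟨f - ContinuousMap.const X (f x), sub_self (f x), ?_⟩
  have hψ : ∀ y, T (f - ContinuousMap.const X (f x)) y = 0 → ψ y • e₀ = f x := by
    intro y hy
    rw [map_sub, hf, ContinuousMap.sub_apply, sub_eq_zero] at hy
    exact hT.smul_eq_of_smul_map_const_apply_eq hy
  rintro _ ⟨y, hy, rfl⟩ _ ⟨y', hy', rfl⟩
  exact smul_left_injective ℝ he₀ ((hψ y hy).trans (hψ y' hy').symm)

end LinearMap

theorem onePointExt_ne_infty_of_mem_closure {Y : Type*} [TopologicalSpace Y] {ψ : C(Y, ℝ)}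
    {S : Set Y} {K : Set ℝ} (hK : IsCompact K) (hS : MapsTo ψ S K) {p : StoneCech Y}
    (hp : p ∈ closure (stoneCechUnit '' S)) : onePointExt ψ p ≠ OnePoint.infty := by
  have hmaps : MapsTo (onePointExt ψ) (stoneCechUnit '' S) ((↑) '' K) := by
    rintro _ ⟨y, hy, rfl⟩
    exact ⟨ψ y, hS hy,
      (congrFun (stoneCechExtend_extends (OnePoint.continuous_coe.comp ψ.continuous)) y).symm⟩
  have hclosed : IsClosed (((↑) : ℝ → OnePoint ℝ) '' K) :=
    (hK.image OnePoint.continuous_coe).isClosed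
  obtain ⟨t, -, ht⟩ := hclosed.closure_subset
    (map_mem_closure (continuous_stoneCechExtend _) hp hmaps)
  exact fun h => OnePoint.coe_ne_infty t (ht.trans h)

theorem prop3 {X Y E F : Type*}
    [TopologicalSpace X]
    [TopologicalSpace Y]
    [AddCommGroup E] [Module ℝ E] [TopologicalSpace E] [IsTopologicalAddGroup E]
    [ContinuousSMul ℝ E] [Nontrivial E]
    [AddCommGroup F] [Module ℝ F] [TopologicalSpace F] [IsTopologicalAddGroup F]
    [ContinuousSMul ℝ F]
    (T : C(X, E) →ₗ[ℝ] C(Y, F)) (hTsurj : Function.Surjective T)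
    (hT : PreservesCommonZerosC (T : C(X, E) → C(Y, F))) :
    (⋃ x : X, ZxC (T : C(X, E) → C(Y, F)) x) ⊆ hewittRealcompactification Y := by
  intro p hp ψ
  obtain ⟨x, hpx⟩ := mem_iUnion.1 hp
  obtain ⟨f₀, hf₀x, hψ⟩ := hT.exists_apply_eq_zero_and_subsingleton_image hTsurj x ψ
  exact onePointExt_ne_infty_of_mem_closure hψ.finite.isCompact (mapsTo_image ψ _)
    (mem_iInter₂.1 hpx f₀ hf₀x)
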